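/- Let M be a finite set of players with n = |M| ≥ 1 and let v : Finset M → ℝ be a coalitional game with v(∅) = 0 that is superadditive (v(S ∪ T) ≥ v(S) + v(T) for all disjoint S, T ⊆ M). Define the Shapley value of player m by φ_m(v) = ∑_{S ⊆ M \ {m}} (|S|!(n − |S| − 1)!/n!) · (v(S ∪ {m}) − v(S)). Then the Shapley value is individually rational: φ_m(v) ≥ v({m}) for every m ∈ M. -/

import Mathlib

/-- The Shapley value of player `m` in the coalitional game `v` on the finite
player set `M`: the weighted average of `m`'s marginal contributions
`v (S ∪ {m}) - v S` over coalitions `S ⊆ M \ {m}`, with weights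
`|S|! (|M| - |S| - 1)! / |M|!`. -/
noncomputable def shapleyValue {M : Type*} [Fintype M] [DecidableEq M]
    (v : Finset M → ℝ) (m : M) : ℝ :=
  ∑ S ∈ ((Finset.univ : Finset M).erase m).powerset,
    ((S.card.factorial : ℝ) *
        ((Fintype.card M - S.card - 1).factorial : ℝ) /
      ((Fintype.card M).factorial : ℝ)) * (v (insert m S) - v S)

/-!
Superadditivity applied to the disjoint coalitions `{m}` and `S` shows that every marginal
contribution of `m` is at least `v {m}`. The Shapley value is a convex combination of these
marginal contributions: the `choose N k` coalitions of size `k` among the other `N` players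
each carry weight `k! (N - k)! / (N + 1)!`, so each size class has total weight `1 / (N + 1)`.
-/

open Finset Nat

noncomputable def shapleyWeight (n k : ℕ) : ℝ :=
  (k ! : ℝ) * ((n - k - 1)! : ℝ) / (n ! : ℝ)

lemma shapleyWeight_nonneg (n k : ℕ) : 0 ≤ shapleyWeight n k := by
  unfold shapleyWeight
  positivity

lemma choose_mul_shapleyWeight {N k : ℕ} (hk : k ≤ N) :
    (N.choose k : ℝ) * shapleyWeight (N + 1) k = 1 / (N + 1) := by
  have hfact : (N.choose k : ℝ) * k ! * (N - k)! = N ! := by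
    exact_mod_cast choose_mul_factorial_mul_factorial hk
  rw [shapleyWeight, show N + 1 - k - 1 = N - k by omega, factorial_succ]
  push_cast
  field_simp
  linear_combination hfact

lemma sum_powerset_shapleyWeight {β : Type*} (s : Finset β) :
    ∑ T ∈ s.powerset, shapleyWeight (#s + 1) #T = 1 := by
  rw [sum_powerset_apply_card]
  simp only [nsmul_eq_mul]
  rw [sum_congr rfl fun k hk => choose_mul_shapleyWeight (mem_range_succ_iff.mp hk),
    sum_const, card_range, nsmul_eq_mul]
  push_cast
  field_simp

lemma sum_shapleyWeight_powerset_erase {M : Type*} [Fintype M] [DecidableEq M] (m : M) :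
    ∑ S ∈ (univ.erase m).powerset, shapleyWeight (Fintype.card M) #S = 1 := by
  have hcard : Fintype.card M = #(univ.erase m) + 1 := by
    rw [card_erase_of_mem (mem_univ m), Finset.card_univ,
      Nat.sub_add_cancel (Fintype.card_pos_iff.mpr ⟨m⟩)]
  rw [hcard]
  exact sum_powerset_shapleyWeight _

lemma le_marginal_of_superadditive {M : Type*} [DecidableEq M] {v : Finset M → ℝ}
    (hsuper : ∀ S T : Finset M, Disjoint S T → v (S ∪ T) ≥ v S + v T)
    {m : M} {S : Finset M} (hm : m ∉ S) :
    v {m} ≤ v (insert m S) - v S := by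
  have := hsuper {m} S (disjoint_singleton_left.mpr hm)
  rw [← insert_eq] at this
  linarith

theorem shapley_individually_rational_general {M : Type*} [Fintype M] [DecidableEq M]
    (v : Finset M → ℝ)
    (hsuper : ∀ S T : Finset M, Disjoint S T → v (S ∪ T) ≥ v S + v T)
    (m : M) :
    shapleyValue v m ≥ v {m} := by
  calc v {m}
      = ∑ S ∈ (univ.erase m).powerset, shapleyWeight (Fintype.card M) #S * v {m} := by
        rw [← sum_mul, sum_shapleyWeight_powerset_erase, one_mul]
    _ ≤ ∑ S ∈ (univ.erase m).powerset,
          shapleyWeight (Fintype.card M) #S * (v (insert m S) - v S) := by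
        refine sum_le_sum fun S hS => ?_
        have hm : m ∉ S := fun h => (mem_erase.mp (mem_powerset.mp hS h)).1 rfl
        exact mul_le_mul_of_nonneg_left (le_marginal_of_superadditive hsuper hm)
          (shapleyWeight_nonneg _ _)
    _ = shapleyValue v m := rfl

/-- Individual rationality of the Shapley value for superadditive games:
each player's allocated payoff is at least the value that player can obtain
alone. -/
theorem shapley_individually_rational {M : Type*} [Fintype M] [DecidableEq M]
    (v : Finset M → ℝ) (hv0 : v ∅ = 0) (hn : 1 ≤ Fintype.card M)
    (hsuper : ∀ S T : Finset M, Disjoint S T → v (S ∪ T) ≥ v S + v T)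
    (m : M) :
    shapleyValue v m ≥ v {m} :=
  shapley_individually_rational_general v hsuper m
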